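/- Let X be a geodesic metric space and suppose ρ : X → ℝ is a (K,ε)-quasi-isometry for some K ≥ 1 and ε ≥ 0. Then there exist ε' ≥ 0 and a map ρ' : X → ℝ which is a (1,ε')-quasi-isometry. -/
import Mathlib

open Set

/-- Coarse intermediate value theorem: a coarsely Lipschitz function on an interval
comes within `K + ε` of every intermediate value. -/
lemma ivt_aux (K ε L v : ℝ) (hK : 0 ≤ K) (hε : 0 ≤ ε) (hL : 0 ≤ L) (f : ℝ → ℝ)
    (hf : ∀ s ∈ Icc (0:ℝ) L, ∀ t ∈ Icc (0:ℝ) L, |f s - f t| ≤ K * |s - t| + ε)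
    (h0 : f 0 ≤ v) (h1 : v ≤ f L) :
    ∃ s ∈ Icc (0:ℝ) L, |f s - v| ≤ K + ε := by
  set S : Set ℝ := {s | s ∈ Icc (0:ℝ) L ∧ f s ≤ v} with hSdef
  have h0S : (0:ℝ) ∈ S := ⟨⟨le_refl 0, hL⟩, h0⟩
  have hne : S.Nonempty := ⟨0, h0S⟩
  have hbdd : BddAbove S := ⟨L, fun s hs => hs.1.2⟩
  set s₀ := sSup S with hs₀def
  have hs₀0 : 0 ≤ s₀ := le_csSup hbdd h0S
  have hs₀L : s₀ ≤ L := csSup_le hne (fun s hs => hs.1.2)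
  obtain ⟨s₁, hs₁S, hs₁gt⟩ := exists_lt_of_lt_csSup hne (show s₀ - 2⁻¹ < s₀ by linarith)
  have hs₁le : s₁ ≤ s₀ := le_csSup hbdd hs₁S
  refine ⟨s₁, hs₁S.1, ?_⟩
  have hfs₁ : f s₁ ≤ v := hs₁S.2
  rcases lt_or_eq_of_le hs₀L with hcase | hcase
  · have hminle : min (s₀ + 2⁻¹) L ≤ s₀ + 2⁻¹ := min_le_left _ _
    have hs₂mem : min (s₀ + 2⁻¹) L ∈ Icc (0:ℝ) L := ⟨le_min (by linarith) hL, min_le_right _ _⟩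
    have hs₂gt : s₀ < min (s₀ + 2⁻¹) L := lt_min (by linarith) hcase
    have hfs₂ : v < f (min (s₀ + 2⁻¹) L) := by
      by_contra h
      push_neg at h
      exact absurd (le_csSup hbdd ⟨hs₂mem, h⟩) (not_le.mpr hs₂gt)
    have hd := hf _ hs₂mem _ hs₁S.1
    have habs : |min (s₀ + 2⁻¹) L - s₁| ≤ 1 := by
      rw [abs_of_nonneg (by linarith)]
      linarith
    have h4 : K * |min (s₀ + 2⁻¹) L - s₁| ≤ K * 1 := mul_le_mul_of_nonneg_left habs hK
    have h3 := le_abs_self (f (min (s₀ + 2⁻¹) L) - f s₁)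
    rw [abs_of_nonpos (by linarith)]
    linarith
  · have hd := hf L ⟨hL, le_refl L⟩ s₁ hs₁S.1
    have hgt : L - 2⁻¹ < s₁ := by rw [← hcase]; exact hs₁gt
    have hs₁L : s₁ ≤ L := hs₁S.1.2
    have habs : |L - s₁| ≤ 1 := by
      rw [abs_of_nonneg (by linarith)]
      linarith
    have h4 : K * |L - s₁| ≤ K * 1 := mul_le_mul_of_nonneg_left habs hK
    have h3 := le_abs_self (f L - f s₁)
    rw [abs_of_nonpos (by linarith)]
    linarith

/-- Coarse betweenness: if `ρ o ≤ ρ y ≤ ρ x`, then `y` lies coarsely between `o` and `x`. -/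
lemma between_aux (X : Type) [MetricSpace X]
    (hgeo : ∀ x y : X, ∃ σ : ℝ → X, σ 0 = x ∧ σ (dist x y) = y ∧
      ∀ s ∈ Set.Icc (0:ℝ) (dist x y), ∀ t ∈ Set.Icc (0:ℝ) (dist x y),
        dist (σ s) (σ t) = |s - t|)
    (ρ : X → ℝ) (K ε : ℝ) (hK : 1 ≤ K) (hε : 0 ≤ ε)
    (hqie : ∀ x y : X, dist x y / K - ε ≤ dist (ρ x) (ρ y) ∧ dist (ρ x) (ρ y) ≤ K * dist x y + ε)
    (o x y : X) (h1 : ρ o ≤ ρ y) (h2 : ρ y ≤ ρ x) :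
    dist x y ≤ dist x o - dist y o + 2 * K * (K + 2 * ε) := by
  obtain ⟨σ, hσ0, hσL, hσd⟩ := hgeo o x
  set L := dist o x with hLdef
  have hL0 : 0 ≤ L := dist_nonneg
  have hK0 : (0:ℝ) < K := lt_of_lt_of_le one_pos hK
  obtain ⟨s, hsmem, hs⟩ := ivt_aux K ε L (ρ y) (le_of_lt hK0) hε hL0 (fun t => ρ (σ t))
    (fun s hs t ht => by
      have h := (hqie (σ s) (σ t)).2
      rw [Real.dist_eq, hσd s hs t ht] at h
      exact h)
    (by simpa [hσ0] using h1) (by simpa [hσL] using h2)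
  have hyp : dist y (σ s) ≤ K * (K + 2 * ε) := by
    have hlow := (hqie y (σ s)).1
    have heq : dist (ρ y) (ρ (σ s)) = |ρ (σ s) - ρ y| := by
      rw [Real.dist_eq, abs_sub_comm]
    rw [heq] at hlow
    have : dist y (σ s) / K ≤ K + 2 * ε := by linarith
    calc dist y (σ s) = dist y (σ s) / K * K := by field_simp
    _ ≤ (K + 2 * ε) * K := mul_le_mul_of_nonneg_right this (le_of_lt hK0)
    _ = K * (K + 2 * ε) := by ring
  have hpo : dist (σ s) o = s := by
    have := hσd s hsmem 0 ⟨le_refl 0, hL0⟩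
    rw [hσ0] at this
    rw [this, sub_zero, abs_of_nonneg hsmem.1]
  have hxp : dist x (σ s) = L - s := by
    have := hσd L ⟨hL0, le_refl L⟩ s hsmem
    rw [hσL] at this
    rw [this, abs_of_nonneg (by linarith [hsmem.2])]
  have ht1 : dist x y ≤ dist x (σ s) + dist (σ s) y := dist_triangle _ _ _
  have ht2 : dist y o ≤ dist y (σ s) + dist (σ s) o := dist_triangle _ _ _
  have hsy : dist (σ s) y = dist y (σ s) := dist_comm _ _
  have hxo : dist x o = L := dist_comm x o ▸ rfl
  rw [hxp, hsy] at ht1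
  rw [hpo] at ht2
  rw [hxo]
  linarith

/-- Coarse betweenness, reversed orientation. -/
lemma between_aux' (X : Type) [MetricSpace X]
    (hgeo : ∀ x y : X, ∃ σ : ℝ → X, σ 0 = x ∧ σ (dist x y) = y ∧
      ∀ s ∈ Set.Icc (0:ℝ) (dist x y), ∀ t ∈ Set.Icc (0:ℝ) (dist x y),
        dist (σ s) (σ t) = |s - t|)
    (ρ : X → ℝ) (K ε : ℝ) (hK : 1 ≤ K) (hε : 0 ≤ ε)
    (hqie : ∀ x y : X, dist x y / K - ε ≤ dist (ρ x) (ρ y) ∧ dist (ρ x) (ρ y) ≤ K * dist x y + ε)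
    (o x y : X) (h1 : ρ x ≤ ρ y) (h2 : ρ y ≤ ρ o) :
    dist x y ≤ dist x o - dist y o + 2 * K * (K + 2 * ε) := by
  refine between_aux X hgeo (fun z => -ρ z) K ε hK hε ?_ o x y (by simpa) (by simpa)
  intro a b
  have h := hqie a b
  have : dist (-ρ a) (-ρ b) = dist (ρ a) (ρ b) := by
    rw [Real.dist_eq, Real.dist_eq]
    rw [show -ρ a - -ρ b = -(ρ a - ρ b) by ring, abs_neg]
  rw [this]
  exact h

/-- a geodesic metric space admitting a (K,ε)-quasi-isometry to ℝ admits a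
(1,ε')-quasi-isometry to ℝ for some ε'. -/
theorem stmt_8 (X : Type) [MetricSpace X]
    -- X is geodesic
    (hgeo : ∀ x y : X, ∃ σ : ℝ → X, σ 0 = x ∧ σ (dist x y) = y ∧
      ∀ s ∈ Set.Icc (0:ℝ) (dist x y), ∀ t ∈ Set.Icc (0:ℝ) (dist x y),
        dist (σ s) (σ t) = |s - t|)
    (ρ : X → ℝ) (K ε : ℝ) (hK : 1 ≤ K) (hε : 0 ≤ ε)
    -- ρ is a (K,ε)-quasi-isometric embedding
    (hqie : ∀ x y : X, dist x y / K - ε ≤ dist (ρ x) (ρ y) ∧ dist (ρ x) (ρ y) ≤ K * dist x y + ε)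
    -- ρ is ε-coarsely onto
    (honto : ∀ r : ℝ, ∃ x : X, dist r (ρ x) ≤ ε) :
    ∃ ε' : ℝ, 0 ≤ ε' ∧ ∃ ρ' : X → ℝ,
      (∀ x y : X, dist x y / 1 - ε' ≤ dist (ρ' x) (ρ' y) ∧
        dist (ρ' x) (ρ' y) ≤ 1 * dist x y + ε') ∧
      ∀ r : ℝ, ∃ x : X, dist r (ρ' x) ≤ ε' := by
  have hK0 : (0:ℝ) < K := lt_of_lt_of_le one_pos hK
  set C : ℝ := 2 * K * (K + 2 * ε) with hCdef
  have hC0 : 0 ≤ C := by nlinarith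
  obtain ⟨o, -⟩ := honto 0
  refine ⟨C, hC0, fun z => if ρ o ≤ ρ z then dist z o else -(dist z o), ?_, ?_⟩
  · intro x y
    rw [div_one, one_mul]
    have htri : |dist x o - dist y o| ≤ dist x y := abs_dist_sub_le x y o
    have hle1 := le_abs_self (dist x o - dist y o)
    have hle2 := neg_abs_le (dist x o - dist y o)
    by_cases hx : ρ o ≤ ρ x <;> by_cases hy : ρ o ≤ ρ y
    · simp only [if_pos hx, if_pos hy, Real.dist_eq]
      constructor
      · rcases le_total (ρ y) (ρ x) with h | h
        · have hb := between_aux X hgeo ρ K ε hK hε hqie o x y hy h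
          linarith
        · have hb := between_aux X hgeo ρ K ε hK hε hqie o y x hx h
          rw [dist_comm y x] at hb
          linarith
      · linarith
    · push_neg at hy
      simp only [if_pos hx, if_neg (not_le.mpr hy), Real.dist_eq]
      have hsum : |dist x o - -(dist y o)| = dist x o + dist y o := by
        rw [sub_neg_eq_add, abs_of_nonneg (by positivity)]
      rw [hsum]
      constructor
      · have := dist_triangle x o y
        rw [dist_comm o y] at this
        linarith
      · have hb := between_aux X hgeo ρ K ε hK hε hqie y x o (le_of_lt hy) hx
        rw [dist_comm o y] at hb
        linarith
    · push_neg at hx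
      simp only [if_neg (not_le.mpr hx), if_pos hy, Real.dist_eq]
      have hsum : |-(dist x o) - dist y o| = dist x o + dist y o := by
        rw [show -(dist x o) - dist y o = -(dist x o + dist y o) by ring, abs_neg,
          abs_of_nonneg (by positivity)]
      rw [hsum]
      constructor
      · have := dist_triangle x o y
        rw [dist_comm o y] at this
        linarith
      · have hb := between_aux X hgeo ρ K ε hK hε hqie x y o (le_of_lt hx) hy
        rw [dist_comm o x, dist_comm y x] at hb
        linarith
    · push_neg at hx hy
      simp only [if_neg (not_le.mpr hx), if_neg (not_le.mpr hy), Real.dist_eq]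
      have hsum : |-(dist x o) - -(dist y o)| = |dist x o - dist y o| := by
        rw [show -(dist x o) - -(dist y o) = -(dist x o - dist y o) by ring, abs_neg]
      rw [hsum]
      constructor
      · rcases le_total (ρ y) (ρ x) with h | h
        · have hb := between_aux' X hgeo ρ K ε hK hε hqie o y x h (le_of_lt hx)
          rw [dist_comm y x] at hb
          linarith
        · have hb := between_aux' X hgeo ρ K ε hK hε hqie o x y h (le_of_lt hy)
          linarith
      · linarith
  · intro r
    rcases le_total 0 r with hr | hr
    · obtain ⟨z, hz⟩ := honto (ρ o + (K * r + 2 * ε))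
      rw [Real.dist_eq] at hz
      have hz1 : ρ o + K * r + ε ≤ ρ z := by
        have := (abs_le.mp hz).2
        linarith
      have hdz : r ≤ dist o z := by
        have h := (hqie z o).2
        rw [Real.dist_eq] at h
        have h2 : ρ z - ρ o ≤ |ρ z - ρ o| := le_abs_self _
        rw [dist_comm o z]
        nlinarith
      obtain ⟨σ, hσ0, hσL, hσd⟩ := hgeo o z
      set L := dist o z with hLdef
      have hL0 : 0 ≤ L := dist_nonneg
      have hrmem : r ∈ Set.Icc (0:ℝ) L := ⟨hr, hdz⟩
      have hpo : dist (σ r) o = r := by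
        have := hσd r hrmem 0 ⟨le_refl 0, hL0⟩
        rw [hσ0] at this
        rw [this, sub_zero, abs_of_nonneg hr]
      by_cases hp : ρ o ≤ ρ (σ r)
      · refine ⟨σ r, ?_⟩
        simp only [if_pos hp, hpo, dist_self]
        exact hC0
      · push_neg at hp
        have hoz : ρ o ≤ ρ z := by nlinarith
        have hb := between_aux X hgeo ρ K ε hK hε hqie (σ r) z o (le_of_lt hp) hoz
        have hzp : dist z (σ r) = L - r := by
          have := hσd L ⟨hL0, le_refl L⟩ r hrmem
          rw [hσL] at this
          rw [this, abs_of_nonneg (by linarith)]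
        have hop : dist o (σ r) = r := by rw [dist_comm]; exact hpo
        rw [hzp, hop, dist_comm z o] at hb
        have h2r : 2 * r ≤ C := by linarith
        refine ⟨σ r, ?_⟩
        simp only [if_neg (not_le.mpr hp), hpo, Real.dist_eq]
        rw [sub_neg_eq_add, abs_of_nonneg (by linarith)]
        linarith
    · obtain ⟨z, hz⟩ := honto (ρ o - (K * (-r) + 2 * ε))
      rw [Real.dist_eq] at hz
      have hz1 : ρ z ≤ ρ o - K * (-r) - ε := by
        have := (abs_le.mp hz).1
        linarith
      have hdz : -r ≤ dist o z := by
        have h := (hqie z o).2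
        rw [Real.dist_eq] at h
        have h2 : ρ o - ρ z ≤ |ρ z - ρ o| := by
          rw [abs_sub_comm]; exact le_abs_self _
        rw [dist_comm o z]
        nlinarith
      obtain ⟨σ, hσ0, hσL, hσd⟩ := hgeo o z
      set L := dist o z with hLdef
      have hL0 : 0 ≤ L := dist_nonneg
      have hrmem : -r ∈ Set.Icc (0:ℝ) L := ⟨by linarith, hdz⟩
      have hpo : dist (σ (-r)) o = -r := by
        have := hσd (-r) hrmem 0 ⟨le_refl 0, hL0⟩
        rw [hσ0] at this
        rw [this, sub_zero, abs_of_nonneg (by linarith)]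
      by_cases hp : ρ o ≤ ρ (σ (-r))
      · have hzo : ρ z ≤ ρ o := by nlinarith
        have hb := between_aux' X hgeo ρ K ε hK hε hqie (σ (-r)) z o hzo hp
        have hzp : dist z (σ (-r)) = L - (-r) := by
          have := hσd L ⟨hL0, le_refl L⟩ (-r) hrmem
          rw [hσL] at this
          rw [this, abs_of_nonneg (by linarith [hrmem.2])]
        have hop : dist o (σ (-r)) = -r := by rw [dist_comm]; exact hpo
        rw [hzp, hop, dist_comm z o] at hb
        have h2r : 2 * (-r) ≤ C := by linarith
        refine ⟨σ (-r), ?_⟩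
        simp only [if_pos hp, hpo, Real.dist_eq]
        rw [abs_of_nonpos (by linarith)]
        linarith
      · refine ⟨σ (-r), ?_⟩
        simp only [if_neg hp, hpo, Real.dist_eq]
        rw [neg_neg, sub_self, abs_zero]
        exact hC0
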